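/- arXiv:2501.04842 — 4 statements merged into one kernel-verified Lean document; each statement's English description precedes it below -/
import Mathlib

section
/- Let s ≥ 1 and f(x) = λᵀx for λ ∈ ℝˢ with exactly s₀ ≥ 1 nonzero entries. For every k ≥ 1, set N = 2ᵏ and let Î_oracle be the oracle stratified estimator of depth k for f. Then Var[Î_oracle] ≤ (1 − 3/(4s₀))ᵏ · Var[Î_MC], where Î_MC = (1/N)∑ f(Xₙ) with Xₙ i.i.d. uniform on [0,1]ˢ; consequently RMSE(Î_oracle) = O(N^(−1/2 − r(s₀))) as k → ∞, where r(s₀) = −log(1 − 3/(4s₀))/(2 log 2), and moreover r(s₀) ≥ 3/(8 s₀ log 2). -/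
/-!
For `f x = ∑ i, λᵢ xᵢ` the coordinates of a uniform point of a box are independent, so on a box
with side lengths `μ` the variance is `Δ = ∑ λᵢ² μᵢ² / 12`. Halving the `j`-th side divides the
`j`-th term by four on both halves, so the oracle splits along the largest term, which is at
least `Δ / s₀` because only `s₀` terms are nonzero. Hence the two children carry at most
`2 (1 - 3/(4 s₀)) Δ`, and over a tree of depth `k` the leaf variances add up to at most
`(2ρ)^k Δ([0,1]^s)` with `ρ = 1 - 3/(4 s₀)`. The stratified estimator has variance
`N⁻² ∑ Δ(leaf)` and plain Monte Carlo `N⁻¹ Δ([0,1]^s)`. The rate comes from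
`ρ^k = N^(log ρ / log 2)`, and the lower bound on `r(s₀)` from `log (1 - x) ≤ -x`.
-/

open MeasureTheory ProbabilityTheory

noncomputable section

/-- The unit hypercube `[0,1]^s`. -/
def unitCube (s : ℕ) : Set (Fin s → ℝ) := Set.Icc 0 1

/-- The uniform distribution on a subset `R` of `ℝ^s` (Lebesgue measure conditioned on `R`). -/
def unif {s : ℕ} (R : Set (Fin s → ℝ)) : Measure (Fin s → ℝ) :=
  (volume : Measure (Fin s → ℝ))[|R]

/-- `Δ(R)`: variance of `f` under the uniform distribution on `R`. -/
def strataVar {s : ℕ} (f : (Fin s → ℝ) → ℝ) (R : Set (Fin s → ℝ)) : ℝ :=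
  variance f (unif R)

/-- `R[j]⁻`: lower half of the rectangle `Icc a b` split at the midpoint of its `j`-th side. -/
def lowerHalf {s : ℕ} (a b : Fin s → ℝ) (j : Fin s) : Set (Fin s → ℝ) :=
  Set.Icc a (Function.update b j ((a j + b j) / 2))

/-- `R[j]⁺`: upper half of the rectangle `Icc a b` split at the midpoint of its `j`-th side. -/
def upperHalf {s : ℕ} (a b : Fin s → ℝ) (j : Fin s) : Set (Fin s → ℝ) :=
  Set.Icc (Function.update a j ((a j + b j) / 2)) b

/-- Law of `N` i.i.d. points uniform on `[0,1]^s`. -/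
def mcMeasure (s N : ℕ) : Measure (Fin N → (Fin s → ℝ)) :=
  Measure.pi fun _ => unif (unitCube s)

/-- The standard Monte Carlo estimator of `∫_{[0,1]^s} f` based on `N` points. -/
def mcEst {s : ℕ} (N : ℕ) (f : (Fin s → ℝ) → ℝ) : (Fin N → (Fin s → ℝ)) → ℝ :=
  fun ω => (∑ n, f (ω n)) / N


/-- An oracle tree of depth `k` for the integrand `f`: a full binary tree of rectangles,
with nodes indexed by words over `Bool`, rooted at `[0,1]^s`, in which every node of
depth `< k` is split in the middle along a direction minimising the oracle CART
criterion `j ↦ ½ Δ(R[j]⁺) + ½ Δ(R[j]⁻)`. -/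
structure OracleTree (s k : ℕ) (f : (Fin s → ℝ) → ℝ) where
  lo : List Bool → Fin s → ℝ
  hi : List Bool → Fin s → ℝ
  root_lo : lo [] = 0
  root_hi : hi [] = 1
  split : ∀ w : List Bool, w.length < k → ∃ j : Fin s,
    (∀ j' : Fin s,
      strataVar f (lowerHalf (lo w) (hi w) j) + strataVar f (upperHalf (lo w) (hi w) j) ≤
        strataVar f (lowerHalf (lo w) (hi w) j') + strataVar f (upperHalf (lo w) (hi w) j')) ∧
    lo (w ++ [false]) = lo w ∧
    hi (w ++ [false]) = Function.update (hi w) j ((lo w j + hi w j) / 2) ∧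
    lo (w ++ [true]) = Function.update (lo w) j ((lo w j + hi w j) / 2) ∧
    hi (w ++ [true]) = hi w

/-- The leaf rectangle of an oracle tree indexed by a word `w` of length `k`. -/
def OracleTree.leaf {s k : ℕ} {f : (Fin s → ℝ) → ℝ} (T : OracleTree s k f)
    (w : Fin k → Bool) : Set (Fin s → ℝ) :=
  Set.Icc (T.lo (List.ofFn w)) (T.hi (List.ofFn w))

/-- Joint law of one independent uniform point in each of the `2^k` leaf rectangles. -/
def oracleMeasure {s k : ℕ} {f : (Fin s → ℝ) → ℝ} (T : OracleTree s k f) :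
    Measure ((Fin k → Bool) → (Fin s → ℝ)) :=
  Measure.pi fun w => unif (T.leaf w)

/-- The oracle stratified estimator `Î_oracle = (1/N) ∑ f(X̃ₙ)`, `N = 2^k`. -/
def oracleEst {s : ℕ} (k : ℕ) (f : (Fin s → ℝ) → ℝ) :
    ((Fin k → Bool) → (Fin s → ℝ)) → ℝ :=
  fun ω => (∑ w : Fin k → Bool, f (ω w)) / 2 ^ k

section Uniform

lemma isProbabilityMeasure_cond_Icc_real {a b : ℝ} (h : a < b) :
    IsProbabilityMeasure ((volume : Measure ℝ)[|Set.Icc a b]) :=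
  cond_isProbabilityMeasure_of_finite (by simpa using h) isCompact_Icc.measure_lt_top.ne

variable {ι : Type*} [Fintype ι]

lemma cond_Icc_eq_pi {a b : ι → ℝ} (h : ∀ i, a i < b i) :
    (volume : Measure (ι → ℝ))[|Set.Icc a b] =
      Measure.pi fun i => (volume : Measure ℝ)[|Set.Icc (a i) (b i)] := by
  refine (Measure.pi_eq fun t _ => ?_).symm
  rw [cond_apply measurableSet_Icc, ← Set.pi_univ_Icc, ← Set.pi_inter_distrib, volume_pi,
    Measure.pi_pi, Measure.pi_pi, ENNReal.prod_inv_distrib, ← Finset.prod_mul_distrib]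
  · exact Finset.prod_congr rfl fun i _ => (cond_apply measurableSet_Icc _ _).symm
  · exact fun i _ _ _ _ => Or.inl (by simpa using h i)

lemma isProbabilityMeasure_cond_Icc {a b : ι → ℝ} (h : ∀ i, a i < b i) :
    IsProbabilityMeasure ((volume : Measure (ι → ℝ))[|Set.Icc a b]) := by
  have := fun i => isProbabilityMeasure_cond_Icc_real (h i)
  rw [cond_Icc_eq_pi h]
  infer_instance

end Uniform

lemma Continuous.memLp_cond_of_isCompact {X : Type*} [TopologicalSpace X] [MeasurableSpace X]
    [OpensMeasurableSpace X] [TopologicalSpace.PseudoMetrizableSpace X] {μ : Measure X}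
    {K : Set X} (hK : IsCompact K) (hKm : MeasurableSet K) {f : X → ℝ} (hf : Continuous f)
    (p : ENNReal) : MemLp f p (μ[|K]) := by
  obtain ⟨C, hC⟩ := hK.exists_bound_of_continuousOn hf.continuousOn
  exact MemLp.of_bound hf.aestronglyMeasurable C ((ae_cond_mem hKm).mono hC)

lemma integral_cond_Icc {a b : ℝ} (h : a < b) (g : ℝ → ℝ) :
    ∫ x, g x ∂(volume : Measure ℝ)[|Set.Icc a b] = (∫ x in a..b, g x) / (b - a) := by
  rw [ProbabilityTheory.cond, integral_smul_measure, integral_Icc_eq_integral_Ioc,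
    ← intervalIntegral.integral_of_le h.le, Real.volume_Icc, ENNReal.toReal_inv,
    ENNReal.toReal_ofReal (sub_nonneg.2 h.le), smul_eq_mul, inv_mul_eq_div]

lemma variance_id_cond_Icc {a b : ℝ} (h : a < b) :
    variance id ((volume : Measure ℝ)[|Set.Icc a b]) = (b - a) ^ 2 / 12 := by
  have := isProbabilityMeasure_cond_Icc_real h
  rw [variance_eq_sub (continuous_id.memLp_cond_of_isCompact isCompact_Icc measurableSet_Icc 2),
    integral_cond_Icc h, integral_cond_Icc h]
  simp only [Pi.pow_apply, id, integral_pow, integral_id]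
  have : b - a ≠ 0 := sub_ne_zero.2 h.ne'
  field_simp
  ring

lemma variance_sum_div_pi {ι α : Type*} [Fintype ι] [MeasurableSpace α] {μ : ι → Measure α}
    [∀ i, IsProbabilityMeasure (μ i)] {f : α → ℝ} (hf : ∀ i, MemLp f 2 (μ i)) (c : ℝ) :
    variance (fun ω : ι → α => (∑ i, f (ω i)) / c) (Measure.pi μ) =
      (∑ i, variance f (μ i)) / c ^ 2 := by
  have hsum : (fun ω : ι → α => (∑ i, f (ω i)) / c) =
      fun ω => c⁻¹ * (∑ i, fun ω : ι → α => f (ω i)) ω := by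
    ext ω; simp [div_eq_inv_mul]
  rw [hsum, variance_const_mul, variance_sum_pi hf, inv_pow, inv_mul_eq_div]

section LinearBoxVar

variable {ι : Type*} [Fintype ι]

def linearBoxVar (lam μ : ι → ℝ) : ℝ := ∑ i, lam i ^ 2 * μ i ^ 2 / 12

lemma linearBoxVar_update_half [DecidableEq ι] (lam μ : ι → ℝ) (j : ι) :
    linearBoxVar lam (Function.update μ j (μ j / 2)) =
      linearBoxVar lam μ - 3 / 4 * (lam j ^ 2 * μ j ^ 2 / 12) := by
  rw [linearBoxVar, linearBoxVar, Fintype.sum_eq_add_sum_compl j,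
    Fintype.sum_eq_add_sum_compl j, Function.update_self,
    Finset.sum_congr rfl fun i hi => by rw [Function.update_of_ne (by simpa using hi)]]
  ring

lemma variance_linear_cond_Icc (lam : ι → ℝ) {a b : ι → ℝ} (h : ∀ i, a i < b i) :
    variance (fun x => ∑ i, lam i * x i) ((volume : Measure (ι → ℝ))[|Set.Icc a b]) =
      linearBoxVar lam (b - a) := by
  have := fun i => isProbabilityMeasure_cond_Icc_real (h i)
  have hsum : (fun x : ι → ℝ => ∑ i, lam i * x i) = ∑ i, fun x => lam i * x i := by
    ext x; simp
  have hmem : ∀ i, MemLp (fun t => lam i * t) 2 ((volume : Measure ℝ)[|Set.Icc (a i) (b i)]) :=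
    fun i => (continuous_const.mul continuous_id).memLp_cond_of_isCompact isCompact_Icc
      measurableSet_Icc 2
  rw [cond_Icc_eq_pi h, hsum, variance_sum_pi hmem, linearBoxVar]
  refine Finset.sum_congr rfl fun i _ => ?_
  rw [variance_const_mul, show (fun x : ℝ => x) = id from rfl, variance_id_cond_Icc (h i),
    Pi.sub_apply]
  ring

end LinearBoxVar

lemma sum_le_card_mul_of_support_subset {ι : Type*} [Fintype ι] {c : ι → ℝ} {S : Finset ι}
    {M : ℝ} (hS : Function.support c ⊆ S) (hM : ∀ i ∈ S, c i ≤ M) :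
    ∑ i, c i ≤ S.card * M := by
  rw [← Finset.sum_subset (Finset.subset_univ S) fun i _ hi =>
    Function.notMem_support.1 fun h => hi (hS h)]
  simpa using Finset.sum_le_card_nsmul S c M hM

section Halves

variable {s : ℕ} {a b : Fin s → ℝ}

lemma lowerHalf_lo_lt_hi (h : ∀ i, a i < b i) (j : Fin s) :
    ∀ i, a i < Function.update b j ((a j + b j) / 2) i := by
  intro i
  rcases eq_or_ne i j with rfl | hij
  · rw [Function.update_self]; linarith [h i]
  · rw [Function.update_of_ne hij]; exact h i

lemma upperHalf_lo_lt_hi (h : ∀ i, a i < b i) (j : Fin s) :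
    ∀ i, Function.update a j ((a j + b j) / 2) i < b i := by
  intro i
  rcases eq_or_ne i j with rfl | hij
  · rw [Function.update_self]; linarith [h i]
  · rw [Function.update_of_ne hij]; exact h i

lemma strataVar_linear_Icc (lam : Fin s → ℝ) (h : ∀ i, a i < b i) :
    strataVar (fun x => ∑ i, lam i * x i) (Set.Icc a b) = linearBoxVar lam (b - a) :=
  variance_linear_cond_Icc lam h

lemma strataVar_linear_lowerHalf (lam : Fin s → ℝ) (h : ∀ i, a i < b i) (j : Fin s) :
    strataVar (fun x => ∑ i, lam i * x i) (lowerHalf a b j) =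
      linearBoxVar lam (b - a) - 3 / 4 * (lam j ^ 2 * (b j - a j) ^ 2 / 12) := by
  have hside : Function.update b j ((a j + b j) / 2) - a =
      Function.update (b - a) j ((b - a) j / 2) := by
    ext i
    rcases eq_or_ne i j with rfl | hij
    · simp only [Pi.sub_apply, Function.update_self]; ring
    · simp [hij]
  rw [lowerHalf, strataVar_linear_Icc lam (lowerHalf_lo_lt_hi h j), hside,
    linearBoxVar_update_half, Pi.sub_apply]

lemma strataVar_linear_upperHalf (lam : Fin s → ℝ) (h : ∀ i, a i < b i) (j : Fin s) :
    strataVar (fun x => ∑ i, lam i * x i) (upperHalf a b j) =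
      linearBoxVar lam (b - a) - 3 / 4 * (lam j ^ 2 * (b j - a j) ^ 2 / 12) := by
  have hside : b - Function.update a j ((a j + b j) / 2) =
      Function.update (b - a) j ((b - a) j / 2) := by
    ext i
    rcases eq_or_ne i j with rfl | hij
    · simp only [Pi.sub_apply, Function.update_self]; ring
    · simp [hij]
  rw [upperHalf, strataVar_linear_Icc lam (upperHalf_lo_lt_hi h j), hside,
    linearBoxVar_update_half, Pi.sub_apply]

end Halves

lemma strataVar_linear_halves_le {s : ℕ} (lam : Fin s → ℝ) {s0 : ℕ} (hs0 : 1 ≤ s0)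
    (hcard : Fintype.card {i : Fin s // lam i ≠ 0} = s0) {a b : Fin s → ℝ}
    (h : ∀ i, a i < b i) (j : Fin s)
    (hmin : ∀ j' : Fin s,
      strataVar (fun x => ∑ i, lam i * x i) (lowerHalf a b j) +
          strataVar (fun x => ∑ i, lam i * x i) (upperHalf a b j) ≤
        strataVar (fun x => ∑ i, lam i * x i) (lowerHalf a b j') +
          strataVar (fun x => ∑ i, lam i * x i) (upperHalf a b j')) :
    strataVar (fun x => ∑ i, lam i * x i) (lowerHalf a b j) +
        strataVar (fun x => ∑ i, lam i * x i) (upperHalf a b j) ≤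
      2 * (1 - 3 / (4 * (s0 : ℝ))) * strataVar (fun x => ∑ i, lam i * x i) (Set.Icc a b) := by
  simp only [strataVar_linear_lowerHalf lam h, strataVar_linear_upperHalf lam h,
    strataVar_linear_Icc lam h] at hmin ⊢
  set t : Fin s → ℝ := fun i => lam i ^ 2 * (b i - a i) ^ 2 / 12
  -- the oracle direction is the one carrying the largest term of `Δ`
  have ht_le : ∀ i, t i ≤ t j := fun i => by simp only [t]; linarith [hmin i]
  have hsum : linearBoxVar lam (b - a) ≤ s0 * t j := by
    rw [← hcard, Fintype.card_subtype]
    refine sum_le_card_mul_of_support_subset (fun i hi => ?_) fun i _ => ht_le i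
    simp only [Finset.coe_filter, Finset.mem_univ, true_and, Set.mem_ofPred_eq]
    rintro hlam
    simp [hlam] at hi
  have hs0' : (0 : ℝ) < s0 := by exact_mod_cast hs0
  have : 3 / (4 * (s0 : ℝ)) * linearBoxVar lam (b - a) ≤ 3 / 4 * t j := by
    calc 3 / (4 * (s0 : ℝ)) * linearBoxVar lam (b - a) ≤ 3 / (4 * s0) * (s0 * t j) := by gcongr
      _ = 3 / 4 * t j := by field_simp
  simp only [t] at this
  linarith

lemma sum_ofFn_le_pow_mul (g : List Bool → ℝ) {r : ℝ} (hr : 0 ≤ r) {k : ℕ}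
    (hsplit : ∀ w : List Bool, w.length < k → g (w ++ [false]) + g (w ++ [true]) ≤ r * g w) :
    ∑ v : Fin k → Bool, g (List.ofFn v) ≤ r ^ k * g [] := by
  induction k with
  | zero => simp
  | succ k ih =>
    have hsum : ∑ v : Fin (k + 1) → Bool, g (List.ofFn v) =
        ∑ u : Fin k → Bool, (g (List.ofFn u ++ [false]) + g (List.ofFn u ++ [true])) := by
      rw [← (Fin.snocEquiv fun _ => Bool).sum_comp, Fintype.sum_prod_type, Fintype.sum_bool,
        add_comm, ← Finset.sum_add_distrib]
      refine Finset.sum_congr rfl fun u _ => ?_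
      simp only [Fin.snocEquiv_apply, List.ofFn_succ', Fin.snoc_castSucc, Fin.snoc_last,
        List.concat_eq_append]
    calc ∑ v : Fin (k + 1) → Bool, g (List.ofFn v)
        ≤ ∑ u : Fin k → Bool, r * g (List.ofFn u) :=
          hsum ▸ Finset.sum_le_sum fun u _ => hsplit _ (by simp)
      _ ≤ r * (r ^ k * g []) := by
          rw [← Finset.mul_sum]
          exact mul_le_mul_of_nonneg_left (ih fun w hw => hsplit w (by omega)) hr
      _ = r ^ (k + 1) * g [] := by ring

namespace OracleTree

variable {s k : ℕ} {f : (Fin s → ℝ) → ℝ} (T : OracleTree s k f)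

lemma lo_lt_hi (w : List Bool) (hw : w.length ≤ k) (i : Fin s) : T.lo w i < T.hi w i := by
  induction w using List.reverseRecOn generalizing i with
  | nil => simp [T.root_lo, T.root_hi]
  | append_singleton w x ih =>
    have hw' : w.length < k := by simpa using hw
    obtain ⟨j, -, hl0, hh0, hl1, hh1⟩ := T.split w hw'
    cases x
    · rw [hl0, hh0]; exact lowerHalf_lo_lt_hi (ih hw'.le) j i
    · rw [hl1, hh1]; exact upperHalf_lo_lt_hi (ih hw'.le) j i

lemma leaf_lo_lt_hi (w : Fin k → Bool) (i : Fin s) :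
    T.lo (List.ofFn w) i < T.hi (List.ofFn w) i :=
  T.lo_lt_hi _ (List.length_ofFn).le i

lemma sum_strataVar_leaf_le {r : ℝ} (hr : 0 ≤ r)
    (hsplit : ∀ a b : Fin s → ℝ, (∀ i, a i < b i) → ∀ j : Fin s,
      (∀ j' : Fin s,
        strataVar f (lowerHalf a b j) + strataVar f (upperHalf a b j) ≤
          strataVar f (lowerHalf a b j') + strataVar f (upperHalf a b j')) →
      strataVar f (lowerHalf a b j) + strataVar f (upperHalf a b j) ≤
        r * strataVar f (Set.Icc a b)) :
    ∑ w, strataVar f (T.leaf w) ≤ r ^ k * strataVar f (unitCube s) := by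
  have := sum_ofFn_le_pow_mul (fun w => strataVar f (Set.Icc (T.lo w) (T.hi w))) hr
    fun w hw => by
      obtain ⟨j, hmin, hl0, hh0, hl1, hh1⟩ := T.split w hw
      rw [hl0, hh0, hl1, hh1]
      exact hsplit _ _ (T.lo_lt_hi w hw.le) j hmin
  rwa [T.root_lo, T.root_hi] at this

lemma variance_oracleEst (hf : Continuous f) :
    variance (oracleEst k f) (oracleMeasure T) =
      (∑ w, strataVar f (T.leaf w)) / (2 ^ k) ^ 2 := by
  have := fun w => isProbabilityMeasure_cond_Icc (T.leaf_lo_lt_hi w)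
  exact variance_sum_div_pi
    (fun w => hf.memLp_cond_of_isCompact isCompact_Icc measurableSet_Icc 2) _

end OracleTree

lemma variance_mcEst {s : ℕ} {f : (Fin s → ℝ) → ℝ} (hf : Continuous f) (N : ℕ) :
    variance (mcEst N f) (mcMeasure s N) = strataVar f (unitCube s) / N := by
  have := isProbabilityMeasure_cond_Icc (ι := Fin s) (a := 0) (b := 1) fun _ => zero_lt_one
  refine (variance_sum_div_pi
    (fun _ => hf.memLp_cond_of_isCompact isCompact_Icc measurableSet_Icc 2) _).trans ?_
  rw [Finset.sum_const, Finset.card_univ, Fintype.card_fin, nsmul_eq_mul]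
  rcases N.eq_zero_or_pos with rfl | hN
  · simp
  · field_simp
    rfl

lemma sqrt_pow_div_two_pow_eq_rpow {ρ : ℝ} (hρ : 0 < ρ) (k : ℕ) :
    Real.sqrt (ρ ^ k / 2 ^ k) =
      ((2 : ℝ) ^ k) ^ (-(1 / 2 : ℝ) - (-Real.log ρ / (2 * Real.log 2))) := by
  have hlog2 : Real.log 2 ≠ 0 := (Real.log_pos one_lt_two).ne'
  rw [Real.sqrt_eq_rpow, Real.rpow_def_of_pos (by positivity),
    Real.rpow_def_of_pos (by positivity), Real.log_div (by positivity) (by positivity),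
    Real.log_pow, Real.log_pow]
  congr 1
  field_simp
  ring

theorem oracle_tree_linear_rate_general {s : ℕ} (lam : Fin s → ℝ) (s0 : ℕ)
    (hs0 : 1 ≤ s0) (hcard : Fintype.card {i : Fin s // lam i ≠ 0} = s0)
    (f : (Fin s → ℝ) → ℝ) (hf : ∀ x, f x = ∑ i, lam i * x i) :
    (∀ k : ℕ, 1 ≤ k → ∀ T : OracleTree s k f,
      variance (oracleEst k f) (oracleMeasure T) ≤
        (1 - 3 / (4 * (s0 : ℝ))) ^ k * variance (mcEst (2 ^ k) f) (mcMeasure s (2 ^ k))) ∧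
      3 / (8 * (s0 : ℝ) * Real.log 2) ≤
        -Real.log (1 - 3 / (4 * (s0 : ℝ))) / (2 * Real.log 2) ∧
      ∃ C : ℝ, ∀ k : ℕ, 1 ≤ k → ∀ T : OracleTree s k f,
        Real.sqrt (variance (oracleEst k f) (oracleMeasure T)) ≤
          C * ((2 : ℝ) ^ k) ^
            (-(1 / 2 : ℝ) - (-Real.log (1 - 3 / (4 * (s0 : ℝ))) / (2 * Real.log 2))) := by
  obtain rfl : f = fun x => ∑ i, lam i * x i := funext hf
  have hcont : Continuous fun x : Fin s → ℝ => ∑ i, lam i * x i := by fun_prop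
  have hs0' : (1 : ℝ) ≤ s0 := by exact_mod_cast hs0
  have hε : 3 / (4 * (s0 : ℝ)) < 1 := by rw [div_lt_one (by positivity)]; linarith
  set ρ := 1 - 3 / (4 * (s0 : ℝ))
  have hρ : 0 < ρ := by linarith
  set D := strataVar (fun x => ∑ i, lam i * x i) (unitCube s)
  have hvar : ∀ k (T : OracleTree s k _),
      variance (oracleEst k _) (oracleMeasure T) ≤ ρ ^ k * (D / 2 ^ k) := fun k T =>
    calc variance (oracleEst k _) (oracleMeasure T)
        ≤ (2 * ρ) ^ k * D / (2 ^ k) ^ 2 := by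
          rw [T.variance_oracleEst hcont]
          gcongr
          exact T.sum_strataVar_leaf_le (by positivity) fun a b h j hmin =>
            strataVar_linear_halves_le lam hs0 hcard h j hmin
      _ = ρ ^ k * (D / 2 ^ k) := by rw [mul_pow]; field_simp
  refine ⟨fun k _ T => ?_, ?_, ⟨Real.sqrt D, fun k _ T => ?_⟩⟩
  · rw [variance_mcEst hcont, Nat.cast_pow, Nat.cast_ofNat]
    exact hvar k T
  · rw [show 3 / (8 * (s0 : ℝ) * Real.log 2) = 3 / (4 * s0) / (2 * Real.log 2) by ring]
    gcongr
    linarith [Real.log_le_sub_one_of_pos hρ]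
  · calc Real.sqrt (variance (oracleEst k _) (oracleMeasure T))
        ≤ Real.sqrt (D * (ρ ^ k / 2 ^ k)) := Real.sqrt_le_sqrt ((hvar k T).trans_eq (by ring))
      _ = _ := by
          rw [Real.sqrt_mul (show 0 ≤ D from variance_nonneg _ _), sqrt_pow_div_two_pow_eq_rpow hρ]

/-- Theorem 1 of the paper: for `f(x) = λᵀx` with exactly `s₀ ≥ 1` nonzero
entries, for every `k ≥ 1` and `N = 2^k`, the oracle stratified estimator of depth `k`
satisfies `Var[Î_oracle] ≤ (1 − 3/(4s₀))^k Var[Î_MC]`; consequently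
`RMSE(Î_oracle) = O(N^(−1/2−r(s₀)))` with `r(s₀) = −log(1 − 3/(4s₀))/(2 log 2)`, and
moreover `r(s₀) ≥ 3/(8 s₀ log 2)`. -/
theorem oracle_tree_linear_rate {s : ℕ} (hs : 1 ≤ s) (lam : Fin s → ℝ) (s0 : ℕ)
    (hs0 : 1 ≤ s0) (hcard : Fintype.card {i : Fin s // lam i ≠ 0} = s0)
    (f : (Fin s → ℝ) → ℝ) (hf : ∀ x, f x = ∑ i, lam i * x i) :
    (∀ k : ℕ, 1 ≤ k → ∀ T : OracleTree s k f,
      variance (oracleEst k f) (oracleMeasure T) ≤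
        (1 - 3 / (4 * (s0 : ℝ))) ^ k * variance (mcEst (2 ^ k) f) (mcMeasure s (2 ^ k))) ∧
      3 / (8 * (s0 : ℝ) * Real.log 2) ≤
        -Real.log (1 - 3 / (4 * (s0 : ℝ))) / (2 * Real.log 2) ∧
      ∃ C : ℝ, ∀ k : ℕ, 1 ≤ k → ∀ T : OracleTree s k f,
        Real.sqrt (variance (oracleEst k f) (oracleMeasure T)) ≤
          C * ((2 : ℝ) ^ k) ^
            (-(1 / 2 : ℝ) - (-Real.log (1 - 3 / (4 * (s0 : ℝ))) / (2 * Real.log 2))) :=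
  oracle_tree_linear_rate_general lam s0 hs0 hcard f hf
end
end

section
/- Let Z₁,…,Z_N (N ≥ 2) be i.i.d. random variables taking values in a compact interval [a,b] with a < b, let Δ = Var(Z₁) > 0 and Δ̂ = (1/(N−1))∑ₙ(Zₙ − Z̄)² the empirical variance. Fix ε > 0 and set γ = (1+ε)^{1/2} − 1. Then P(Δ̂/Δ > 1 + ε) ≤ exp(−(N−1)Δγ²/(2(b−a)²)) and P(Δ̂/Δ < 1 − ε) ≤ exp(−(N−1)Δγ²/(2(b−a)²)). -/
/-!
`Δ̂` is a U-statistic with kernel `(x - y)² / 2`, so (Hoeffding) it is the average, over all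
permutations `σ` of the sample, of the statistic that uses only the `⌊N/2⌋` disjoint pairs
`(Z_{σ(2i)}, Z_{σ(2i+1)})`. By Jensen, the moment generating function of `Δ̂` is at most that of
one such paired statistic, which is a normalized sum of `k = ⌊N/2⌋` independent variables with
values in `[0, (b-a)²/2]` and mean `Δ`. Bounding `exp` on that interval by its chord gives a
Poisson-type bound on the moment generating function, and the Chernoff bound at a suitable
parameter gives both tails, with `2k ≥ N - 1`.
-/

open MeasureTheory ProbabilityTheory Real Finset

lemma exp_mul_le_one_add_div_mul_exp_sub_one {c x M : ℝ} (hx : 0 ≤ x) (hxM : x ≤ M)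
    (hM : 0 < M) : exp (c * x) ≤ 1 + x / M * (exp (c * M) - 1) := by
  have hw : x / M ≤ 1 := (div_le_one hM).2 hxM
  have := convexOn_exp.2 (Set.mem_univ 0) (Set.mem_univ (c * M)) (sub_nonneg.2 hw)
    (div_nonneg hx hM.le) (sub_add_cancel 1 (x / M))
  have hcx : x / M * (c * M) = c * x := by field_simp
  simp only [smul_eq_mul, mul_zero, zero_add, exp_zero, hcx] at this
  linarith

lemma exp_neg_le_one_sub_add_sq_div_two {u : ℝ} (hu : 0 ≤ u) :
    exp (-u) ≤ 1 - u + u ^ 2 / 2 := by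
  rw [exp_neg, inv_le_iff_one_le_mul₀ (exp_pos u)]
  calc 1 ≤ (1 - u + u ^ 2 / 2) * (1 + u + u ^ 2 / 2) := by nlinarith [sq_nonneg (u ^ 2)]
    _ ≤ (1 - u + u ^ 2 / 2) * exp u :=
      mul_le_mul_of_nonneg_left (quadratic_le_exp_of_nonneg hu) (by nlinarith [sq_nonneg (u - 1)])

lemma sq_sqrt_one_add_sub_one_le_sq {ε : ℝ} (hε : 0 ≤ ε) : (√(1 + ε) - 1) ^ 2 ≤ ε ^ 2 := by
  have hsq := sq_sqrt (by linarith : (0 : ℝ) ≤ 1 + ε)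
  have hone : 1 ≤ √(1 + ε) := one_le_sqrt.2 (by linarith)
  exact pow_le_pow_left₀ (by linarith) (by nlinarith) 2

lemma Nat.cast_sub_one_le_two_mul_cast_div_two (N : ℕ) : (N : ℝ) - 1 ≤ 2 * (N / 2 : ℕ) := by
  have : (N : ℝ) ≤ 2 * (N / 2 : ℕ) + 1 := by exact_mod_cast (by omega : N ≤ 2 * (N / 2) + 1)
  linarith

lemma inv_card_mul_sum_mem_Icc {ι : Type*} [Fintype ι] [Nonempty ι] {f : ι → ℝ} {a b : ℝ}
    (h : ∀ i, f i ∈ Set.Icc a b) : (Fintype.card ι : ℝ)⁻¹ * ∑ i, f i ∈ Set.Icc a b := by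
  rw [inv_mul_eq_div, ← Fintype.expect_eq_sum_div_card]
  exact ⟨le_expect univ_nonempty fun i _ => (h i).1, expect_le univ_nonempty fun i _ => (h i).2⟩

lemma sq_sub_div_two_mem_Icc {a b x y : ℝ} (hx : x ∈ Set.Icc a b) (hy : y ∈ Set.Icc a b) :
    (x - y) ^ 2 / 2 ∈ Set.Icc 0 ((b - a) ^ 2 / 2) := by
  obtain ⟨hxa, hxb⟩ := hx
  obtain ⟨hya, hyb⟩ := hy
  exact ⟨by positivity, by nlinarith⟩

lemma Equiv.Perm.exists_apply_eq_and_apply_eq {α : Type*} [DecidableEq α] {j l j' l' : α}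
    (h : j ≠ l) (h' : j' ≠ l') : ∃ σ : Equiv.Perm α, σ j = j' ∧ σ l = l' := by
  refine ⟨Equiv.swap (Equiv.swap j j' l) l' * Equiv.swap j j', ?_, ?_⟩
  · rw [Equiv.Perm.mul_apply, Equiv.swap_apply_left]
    exact Equiv.swap_apply_of_ne_of_ne
      (fun hc => h ((Equiv.swap j j').injective ((Equiv.swap_apply_left j j').trans hc))) h'
  · rw [Equiv.Perm.mul_apply, Equiv.swap_apply_left]

section Permutations

variable {α : Type*} [Fintype α] [DecidableEq α]

lemma sum_perm_apply_apply_eq {R : Type*} [AddCommMonoid R] (G : α → α → R) {j l j' l' : α}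
    (h : j ≠ l) (h' : j' ≠ l') :
    ∑ σ : Equiv.Perm α, G (σ j) (σ l) = ∑ σ : Equiv.Perm α, G (σ j') (σ l') := by
  obtain ⟨τ, hτj, hτl⟩ := Equiv.Perm.exists_apply_eq_and_apply_eq h' h
  exact Fintype.sum_equiv (Equiv.mulRight τ) _ _ fun σ => by simp [hτj, hτl]

/-- Double counting: by `sum_perm_apply_apply_eq` the left side is the sum of
`∑ σ, G (σ p.1) (σ p.2)` over all `p ∈ offDiag`, that is, `N!` copies of the right-hand sum. -/
lemma card_offDiag_smul_sum_perm_apply_apply {R : Type*} [AddCommMonoid R] (G : α → α → R)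
    {j l : α} (h : j ≠ l) :
    #(univ : Finset α).offDiag • ∑ σ : Equiv.Perm α, G (σ j) (σ l)
      = (Fintype.card α).factorial • ∑ p ∈ (univ : Finset α).offDiag, G p.1 p.2 := by
  have hinv (σ : Equiv.Perm α) :
      ∑ p ∈ (univ : Finset α).offDiag, G (σ p.1) (σ p.2) = ∑ p ∈ univ.offDiag, G p.1 p.2 :=
    sum_equiv (σ.prodCongr σ) (by simp [σ.injective.ne_iff]) fun _ _ => rfl
  rw [← sum_const, ← Fintype.card_perm, ← card_univ, ← sum_const]
  calc ∑ p ∈ (univ : Finset α).offDiag, ∑ σ : Equiv.Perm α, G (σ j) (σ l)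
      = ∑ p ∈ (univ : Finset α).offDiag, ∑ σ : Equiv.Perm α, G (σ p.1) (σ p.2) :=
        sum_congr rfl fun p hp => sum_perm_apply_apply_eq G h (mem_offDiag.1 hp).2.2
    _ = _ := by rw [sum_comm]; exact sum_congr rfl fun σ _ => hinv σ

lemma average_perm_sum_pairs_eq {κ R : Type*} [Fintype κ] [Nonempty κ] [Field R] [CharZero R]
    (e : κ × Fin 2 ↪ α) (G : α → α → R) :
    ((Fintype.card α).factorial : R)⁻¹ * ∑ σ : Equiv.Perm α,
        (Fintype.card κ : R)⁻¹ * ∑ i, G (σ (e (i, 0))) (σ (e (i, 1)))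
      = (#(univ : Finset α).offDiag : R)⁻¹ * ∑ p ∈ (univ : Finset α).offDiag, G p.1 p.2 := by
  have hpair (i : κ) : ((Fintype.card α).factorial : R)⁻¹
        * ∑ σ : Equiv.Perm α, G (σ (e (i, 0))) (σ (e (i, 1)))
      = (#(univ : Finset α).offDiag : R)⁻¹ * ∑ p ∈ (univ : Finset α).offDiag, G p.1 p.2 := by
    have hne : e (i, 0) ≠ e (i, 1) := by simp
    have hcount := card_offDiag_smul_sum_perm_apply_apply G hne
    have hoff : (#(univ : Finset α).offDiag : R) ≠ 0 := Nat.cast_ne_zero.2 <| card_ne_zero_of_mem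
      (mem_offDiag (x := (e (i, 0), e (i, 1))) |>.2 ⟨mem_univ _, mem_univ _, hne⟩)
    have hfact : ((Fintype.card α).factorial : R) ≠ 0 :=
      Nat.cast_ne_zero.2 (Nat.factorial_ne_zero _)
    rw [nsmul_eq_mul, nsmul_eq_mul] at hcount
    field_simp
    linear_combination hcount
  calc _ = (Fintype.card κ : R)⁻¹ * ∑ i, ((Fintype.card α).factorial : R)⁻¹ *
        ∑ σ : Equiv.Perm α, G (σ (e (i, 0))) (σ (e (i, 1))) := by
          simp_rw [mul_sum]
          rw [sum_comm]
          exact sum_congr rfl fun _ _ => sum_congr rfl fun _ _ => by ring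
    _ = _ := by
      rw [sum_congr rfl fun i _ => hpair i, sum_const, card_univ, nsmul_eq_mul, ← mul_assoc,
        inv_mul_cancel₀ (Nat.cast_ne_zero.2 Fintype.card_ne_zero), one_mul]

end Permutations

noncomputable def sampleVariance {N : ℕ} (x : Fin N → ℝ) : ℝ :=
  ((N : ℝ) - 1)⁻¹ * ∑ n, (x n - (N : ℝ)⁻¹ * ∑ m, x m) ^ 2

noncomputable def pairedVariance {ι κ : Type*} [Fintype κ] (e : κ × Fin 2 ↪ ι) (x : ι → ℝ) :
    ℝ :=
  (Fintype.card κ : ℝ)⁻¹ * ∑ i, (x (e (i, 0)) - x (e (i, 1))) ^ 2 / 2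

/-- The pairs `(2i, 2i+1)`, `i < k`. -/
def pairing {k N : ℕ} (h : k * 2 ≤ N) : Fin k × Fin 2 ↪ Fin N :=
  finProdFinEquiv.toEmbedding.trans (Fin.castLEEmb h)

lemma sum_offDiag_sq_sub_div_two {ι : Type*} [Fintype ι] [DecidableEq ι] (x : ι → ℝ) :
    ∑ p ∈ (univ : Finset ι).offDiag, (x p.1 - x p.2) ^ 2 / 2
      = Fintype.card ι * ∑ n, (x n - (Fintype.card ι : ℝ)⁻¹ * ∑ m, x m) ^ 2 := by
  rcases isEmpty_or_nonempty ι with _ | _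
  · simp
  have hcard : (Fintype.card ι : ℝ) ≠ 0 := Nat.cast_ne_zero.2 Fintype.card_ne_zero
  rw [sum_subset (subset_univ _) fun p _ hp => by simp_all, Fintype.sum_prod_type]
  simp only [sub_sq, add_div, sub_div, sum_add_distrib, sum_sub_distrib, ← mul_sum, ← sum_mul,
    ← sum_div, mul_pow, sum_const, card_univ, nsmul_eq_mul]
  field_simp
  ring

lemma sampleVariance_eq_average_offDiag {N : ℕ} (x : Fin N → ℝ) :
    sampleVariance x = (#(univ : Finset (Fin N)).offDiag : ℝ)⁻¹
      * ∑ p ∈ univ.offDiag, (x p.1 - x p.2) ^ 2 / 2 := by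
  rw [sum_offDiag_sq_sub_div_two, offDiag_card, card_univ, Fintype.card_fin, sampleVariance]
  rcases Nat.lt_or_ge N 1 with hN | hN
  · obtain rfl : N = 0 := by omega
    simp
  have hN0 : (N : ℝ) ≠ 0 := by positivity
  rw [Nat.cast_sub (Nat.le_mul_self N), Nat.cast_mul, show (N : ℝ) * N - N = N * (N - 1) by ring,
    mul_inv, mul_mul_mul_comm, inv_mul_cancel₀ hN0, one_mul]

lemma sampleVariance_eq_average_perm {N k : ℕ} (hk : 0 < k) (h : k * 2 ≤ N) (x : Fin N → ℝ) :
    sampleVariance x = (N.factorial : ℝ)⁻¹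
      * ∑ σ : Equiv.Perm (Fin N), pairedVariance ((pairing h).trans σ.toEmbedding) x := by
  have : Nonempty (Fin k) := ⟨⟨0, hk⟩⟩
  have := average_perm_sum_pairs_eq (pairing h) fun m n => (x m - x n) ^ 2 / 2
  rw [Fintype.card_fin] at this
  rw [sampleVariance_eq_average_offDiag, ← this]
  rfl

lemma pairedVariance_mem_Icc {ι κ : Type*} [Fintype κ] [Nonempty κ] (e : κ × Fin 2 ↪ ι)
    {x : ι → ℝ} {a b : ℝ} (hx : ∀ n, x n ∈ Set.Icc a b) :
    pairedVariance e x ∈ Set.Icc 0 ((b - a) ^ 2 / 2) :=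
  inv_card_mul_sum_mem_Icc fun _ => sq_sub_div_two_mem_Icc (hx _) (hx _)

lemma sampleVariance_mem_Icc {N : ℕ} (hN : 2 ≤ N) {x : Fin N → ℝ} {a b : ℝ}
    (hx : ∀ n, x n ∈ Set.Icc a b) : sampleVariance x ∈ Set.Icc 0 ((b - a) ^ 2 / 2) := by
  have h : 1 * 2 ≤ N := hN
  have := inv_card_mul_sum_mem_Icc fun σ : Equiv.Perm (Fin N) =>
    pairedVariance_mem_Icc ((pairing h).trans σ.toEmbedding) hx
  rwa [Fintype.card_perm, Fintype.card_fin, ← sampleVariance_eq_average_perm one_pos h] at this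

lemma ProbabilityTheory.iIndepFun.curry {Ω ι : Type*} [MeasurableSpace Ω] {P : Measure Ω}
    {κ : ι → Type*} {𝓧 : (i : ι) → κ i → Type*} [∀ i j, MeasurableSpace (𝓧 i j)]
    {X : (i : ι) → (j : κ i) → Ω → 𝓧 i j} (mX : ∀ i j, Measurable (X i j))
    (h : iIndepFun (fun (p : (i : ι) × κ i) ω ↦ X p.1 p.2 ω) P) :
    iIndepFun (fun i ω ↦ (X i · ω)) P := by
  have := h.isProbabilityMeasure
  have : ∀ i j, IsProbabilityMeasure (P.map (X i j)) :=
    fun i j ↦ Measure.isProbabilityMeasure_map (mX i j).aemeasurable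
  have hcurry : MeasurableEquiv.piCurry 𝓧 ∘ (fun ω p ↦ X p.1 p.2 ω) = fun ω i j ↦ X i j ω := by
    ext; simp [Sigma.curry]
  have hblock (i : ι) :
      P.map (fun ω ↦ (X i · ω)) = Measure.infinitePi (fun j ↦ P.map (X i j)) :=
    (iIndepFun_iff_map_fun_eq_infinitePi_map (mX i)).1
      (h.precomp (g := Sigma.mk i) sigma_mk_injective)
  rw [iIndepFun_iff_map_fun_eq_infinitePi_map (fun i ↦ by fun_prop), ← hcurry,
    ← Measure.map_map (by fun_prop) (by fun_prop),
    (iIndepFun_iff_map_fun_eq_infinitePi_map (fun p ↦ mX p.1 p.2)).1 h,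
    Measure.infinitePi_map_piCurry (fun i j ↦ P.map (X i j))]
  simp_rw [hblock]

section Moments

variable {Ω : Type*} [MeasurableSpace Ω] {μ : Measure Ω}

lemma mgf_inv_card_mul_sum_le {ι : Type*} [Fintype ι] [Nonempty ι] {Y : ι → Ω → ℝ} {t B : ℝ}
    (hY : ∀ i, Integrable (fun ω => exp (t * Y i ω)) μ) (hB : ∀ i, mgf (Y i) μ t ≤ B) :
    mgf (fun ω => (Fintype.card ι : ℝ)⁻¹ * ∑ i, Y i ω) μ t ≤ B := by
  have hcard : (Fintype.card ι : ℝ)⁻¹ * Fintype.card ι = 1 :=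
    inv_mul_cancel₀ (Nat.cast_ne_zero.2 Fintype.card_ne_zero)
  have hjensen (ω : Ω) : exp (t * ((Fintype.card ι : ℝ)⁻¹ * ∑ i, Y i ω))
      ≤ (Fintype.card ι : ℝ)⁻¹ * ∑ i, exp (t * Y i ω) := by
    have := convexOn_exp.map_sum_le (t := univ) (w := fun _ => (Fintype.card ι : ℝ)⁻¹)
      (p := fun i => t * Y i ω) (fun _ _ => by positivity)
      (by rw [sum_const, card_univ, nsmul_eq_mul, mul_comm, hcard]) fun _ _ => Set.mem_univ _
    simpa only [smul_eq_mul, ← mul_sum, mul_left_comm] using this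
  calc mgf _ μ t ≤ ∫ ω, (Fintype.card ι : ℝ)⁻¹ * ∑ i, exp (t * Y i ω) ∂μ :=
        integral_mono_of_nonneg (ae_of_all _ fun _ => (exp_pos _).le)
          ((integrable_finsetSum _ fun i _ => hY i).const_mul _) (ae_of_all _ hjensen)
    _ = (Fintype.card ι : ℝ)⁻¹ * ∑ i, mgf (Y i) μ t := by
        rw [integral_const_mul, integral_finsetSum _ fun i _ => hY i]
        rfl
    _ ≤ (Fintype.card ι : ℝ)⁻¹ * ∑ _i : ι, B := by gcongr with i; exact hB i
    _ = B := by rw [sum_const, card_univ, nsmul_eq_mul, ← mul_assoc, hcard, one_mul]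

variable [IsProbabilityMeasure μ]

lemma mgf_le_exp_integral_div_mul_exp_sub_one {X : Ω → ℝ} {M : ℝ} (hM : 0 < M)
    (hX : AEMeasurable X μ) (hXM : ∀ᵐ ω ∂μ, X ω ∈ Set.Icc 0 M) (t : ℝ) :
    mgf X μ t ≤ exp (μ[X] / M * (exp (t * M) - 1)) := by
  have hint : Integrable X μ := Integrable.of_mem_Icc 0 M hX hXM
  calc mgf X μ t ≤ ∫ ω, 1 + X ω / M * (exp (t * M) - 1) ∂μ := by
        refine integral_mono_ae (integrable_exp_mul_of_mem_Icc hX hXM)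
          ((integrable_const 1).add ((hint.div_const M).mul_const _)) ?_
        filter_upwards [hXM] with ω hω
        exact exp_mul_le_one_add_div_mul_exp_sub_one hω.1 hω.2 hM
    _ = 1 + μ[X] / M * (exp (t * M) - 1) := by
        rw [integral_add (integrable_const 1) ((hint.div_const M).mul_const _), integral_const,
          integral_mul_const, integral_div]
        simp
    _ ≤ exp (μ[X] / M * (exp (t * M) - 1)) := by
        linarith [add_one_le_exp (μ[X] / M * (exp (t * M) - 1))]

lemma ProbabilityTheory.IndepFun.integral_sq_sub_div_two {X Y : Ω → ℝ} (hXY : IndepFun X Y μ)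
    (hident : IdentDistrib X Y μ μ) (hX : MemLp X 2 μ) :
    ∫ ω, (X ω - Y ω) ^ 2 / 2 ∂μ = variance X μ := by
  have hY : MemLp Y 2 μ := hident.memLp_snd hX
  have hmean : μ[X - Y] = 0 := by
    rw [integral_sub' (hX.integrable one_le_two) (hY.integrable one_le_two), hident.integral_eq,
      sub_self]
  have hvar := variance_of_integral_eq_zero (hX.aemeasurable.sub hY.aemeasurable) hmean
  rw [variance_sub hX hY, hXY.covariance_eq_zero hX hY, ← hident.variance_eq] at hvar
  simp only [Pi.sub_apply] at hvar
  rw [integral_div, ← hvar]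
  ring

lemma mgf_sq_sub_div_two_le {a b : ℝ} (hab : a < b) {X Y : Ω → ℝ} (hXY : IndepFun X Y μ)
    (hident : IdentDistrib X Y μ μ)
    (hXab : ∀ ω, X ω ∈ Set.Icc a b) (hYab : ∀ ω, Y ω ∈ Set.Icc a b) (t : ℝ) :
    mgf (fun ω => (X ω - Y ω) ^ 2 / 2) μ t
      ≤ exp (variance X μ / ((b - a) ^ 2 / 2) * (exp (t * ((b - a) ^ 2 / 2)) - 1)) := by
  have hX : MemLp X 2 μ :=
    memLp_of_bounded (ae_of_all _ hXab) hident.aemeasurable_fst.aestronglyMeasurable 2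
  rw [← hXY.integral_sq_sub_div_two hident hX]
  exact mgf_le_exp_integral_div_mul_exp_sub_one (by nlinarith)
    (((hident.aemeasurable_fst.sub hident.aemeasurable_snd).pow_const 2).div_const 2)
    (ae_of_all _ fun ω => sq_sub_div_two_mem_Icc (hXab ω) (hYab ω)) t

lemma mgf_pairedVariance_le {ι κ : Type*} [Fintype κ] [Nonempty κ] {Z : ι → Ω → ℝ}
    (hmeas : ∀ n, Measurable (Z n)) (hindep : iIndepFun Z μ)
    (hident : ∀ m n, IdentDistrib (Z m) (Z n) μ μ) {a b : ℝ} (hab : a < b)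
    (hval : ∀ n ω, Z n ω ∈ Set.Icc a b) (e : κ × Fin 2 ↪ ι) (n₀ : ι) (θ : ℝ) :
    mgf (fun ω => pairedVariance e (Z · ω)) μ θ
      ≤ exp (variance (Z n₀) μ / ((b - a) ^ 2 / (2 * Fintype.card κ))
          * (exp (θ * ((b - a) ^ 2 / (2 * Fintype.card κ))) - 1)) := by
  have hblocks : iIndepFun (fun i ω (j : Fin 2) => Z (e (i, j)) ω) μ :=
    iIndepFun.curry (X := fun i j => Z (e (i, j))) (fun _ _ => hmeas _)
      (hindep.precomp (g := fun p : (_ : κ) × Fin 2 => e (p.1, p.2))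
        (e.injective.comp (Equiv.sigmaEquivProd κ (Fin 2)).injective))
  have hpairs : iIndepFun (fun i ω => (Z (e (i, 0)) ω - Z (e (i, 1)) ω) ^ 2 / 2) μ :=
    hblocks.comp (fun _ v => (v 0 - v 1) ^ 2 / 2) fun _ => by fun_prop
  have hpair (i : κ) := mgf_sq_sub_div_two_le hab (hindep.indepFun (e.injective.ne (by simp)))
    (hident (e (i, 0)) (e (i, 1))) (hval _) (hval _) ((Fintype.card κ : ℝ)⁻¹ * θ)
  unfold pairedVariance
  rw [mgf_const_mul, ← Finset.sum_fn, hpairs.mgf_sum fun _ => by fun_prop]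
  calc ∏ i, mgf _ μ _ ≤ ∏ _i : κ, exp (variance (Z n₀) μ / ((b - a) ^ 2 / 2)
        * (exp ((Fintype.card κ : ℝ)⁻¹ * θ * ((b - a) ^ 2 / 2)) - 1)) :=
        prod_le_prod (fun _ _ => mgf_nonneg) fun i _ =>
          (hpair i).trans_eq (by rw [(hident _ n₀).variance_eq])
    _ = _ := by
        rw [prod_const, card_univ, ← exp_nat_mul]
        congr 1
        field_simp

lemma mgf_sampleVariance_le {N : ℕ} (hN : 2 ≤ N) {Z : Fin N → Ω → ℝ}
    (hmeas : ∀ n, Measurable (Z n)) (hindep : iIndepFun Z μ)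
    (hident : ∀ m n, IdentDistrib (Z m) (Z n) μ μ) {a b : ℝ} (hab : a < b)
    (hval : ∀ n ω, Z n ω ∈ Set.Icc a b) (n₀ : Fin N) (θ : ℝ) :
    mgf (fun ω => sampleVariance (Z · ω)) μ θ
      ≤ exp (variance (Z n₀) μ / ((b - a) ^ 2 / (2 * (N / 2 : ℕ)))
          * (exp (θ * ((b - a) ^ 2 / (2 * (N / 2 : ℕ)))) - 1)) := by
  have hk : 0 < N / 2 := by omega
  have h : N / 2 * 2 ≤ N := Nat.div_mul_le_self N 2
  have : Nonempty (Fin (N / 2)) := ⟨⟨0, hk⟩⟩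
  have hrepr : (fun ω => sampleVariance (Z · ω)) = fun ω =>
      (Fintype.card (Equiv.Perm (Fin N)) : ℝ)⁻¹
        * ∑ σ : Equiv.Perm (Fin N), pairedVariance ((pairing h).trans σ.toEmbedding) (Z · ω) := by
    ext ω
    rw [sampleVariance_eq_average_perm hk h, Fintype.card_perm, Fintype.card_fin]
  rw [hrepr]
  refine mgf_inv_card_mul_sum_le (fun σ => integrable_exp_mul_of_mem_Icc ?_
    (ae_of_all _ fun ω => pairedVariance_mem_Icc _ (hval · ω))) fun σ => ?_
  · unfold pairedVariance
    fun_prop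
  · simpa using mgf_pairedVariance_le hmeas hindep hident hab hval
      ((pairing h).trans σ.toEmbedding) n₀ θ

lemma integrable_exp_mul_sampleVariance {N : ℕ} (hN : 2 ≤ N) {Z : Fin N → Ω → ℝ}
    (hmeas : ∀ n, Measurable (Z n)) {a b : ℝ} (hval : ∀ n ω, Z n ω ∈ Set.Icc a b) (θ : ℝ) :
    Integrable (fun ω => exp (θ * sampleVariance (Z · ω))) μ :=
  integrable_exp_mul_of_mem_Icc (by unfold sampleVariance; fun_prop)
    (ae_of_all _ fun ω => sampleVariance_mem_Icc hN (hval · ω))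

/-! `hmgf` says that the moment generating function of `V` is at most that of `ρ` times a Poisson
variable of mean `Δ / ρ`. -/

section Tails

variable {V : Ω → ℝ} {Δ ρ ε : ℝ}

lemma measureReal_ge_le_of_mgf_le (hΔ : 0 ≤ Δ) (hρ : 0 < ρ) (hε : 0 ≤ ε)
    (hint : ∀ θ, Integrable (fun ω => exp (θ * V ω)) μ)
    (hmgf : ∀ θ, mgf V μ θ ≤ exp (Δ / ρ * (exp (θ * ρ) - 1))) :
    μ.real {ω | (1 + ε) * Δ ≤ V ω} ≤ exp (-(Δ / ρ * (√(1 + ε) - 1) ^ 2 / 2)) := by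
  set θ := log (1 + ε) / (2 * ρ) with hθdef
  have hθ : 0 ≤ θ := div_nonneg (log_nonneg (by linarith)) (by positivity)
  have hexp : exp (θ * ρ) = √(1 + ε) := by
    rw [← exp_log (sqrt_pos.2 (by linarith : (0 : ℝ) < 1 + ε)), log_sqrt (by linarith)]
    congr 1
    rw [hθdef]
    field_simp
  have hlog : ε ≤ (1 + ε) * log (1 + ε) := by
    calc ε = (1 + ε) * (1 - (1 + ε)⁻¹) := by field_simp; ring
      _ ≤ (1 + ε) * log (1 + ε) := mul_le_mul_of_nonneg_left
          (one_sub_inv_le_log_of_pos (by linarith)) (by linarith)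
  have hsq := sq_sqrt (by linarith : (0 : ℝ) ≤ 1 + ε)
  have hrate : 0 ≤ Δ / ρ := div_nonneg hΔ hρ.le
  calc μ.real {ω | (1 + ε) * Δ ≤ V ω} ≤ exp (-θ * ((1 + ε) * Δ)) * mgf V μ θ :=
        measure_ge_le_exp_mul_mgf _ hθ (hint θ)
    _ ≤ exp (-θ * ((1 + ε) * Δ)) * exp (Δ / ρ * (√(1 + ε) - 1)) := by
        rw [← hexp]
        gcongr
        exact hmgf θ
    _ = exp (Δ / ρ * ((√(1 + ε) - 1) - (1 + ε) * log (1 + ε) / 2)) := by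
        rw [← exp_add, hθdef]
        congr 1
        field_simp
        ring
    _ ≤ exp (-(Δ / ρ * (√(1 + ε) - 1) ^ 2 / 2)) := by
        rw [exp_le_exp]
        nlinarith [mul_le_mul_of_nonneg_left hlog hrate]

lemma measureReal_le_le_of_mgf_le (hΔ : 0 ≤ Δ) (hρ : 0 < ρ) (hε : 0 ≤ ε)
    (hint : ∀ θ, Integrable (fun ω => exp (θ * V ω)) μ)
    (hmgf : ∀ θ, mgf V μ θ ≤ exp (Δ / ρ * (exp (θ * ρ) - 1))) :
    μ.real {ω | V ω ≤ (1 - ε) * Δ} ≤ exp (-(Δ / ρ * ε ^ 2 / 2)) := by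
  have hθ : -ε / ρ ≤ 0 := div_nonpos_of_nonpos_of_nonneg (by linarith) hρ.le
  have hrate : 0 ≤ Δ / ρ := div_nonneg hΔ hρ.le
  calc μ.real {ω | V ω ≤ (1 - ε) * Δ} ≤ exp (-(-ε / ρ) * ((1 - ε) * Δ)) * mgf V μ (-ε / ρ) :=
        measure_le_le_exp_mul_mgf _ hθ (hint _)
    _ ≤ exp (-(-ε / ρ) * ((1 - ε) * Δ)) * exp (Δ / ρ * (exp (-ε) - 1)) := by
        gcongr
        simpa only [div_mul_cancel₀ _ hρ.ne'] using hmgf (-ε / ρ)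
    _ = exp (Δ / ρ * (ε * (1 - ε) + (exp (-ε) - 1))) := by
        rw [← exp_add]
        congr 1
        ring
    _ ≤ exp (-(Δ / ρ * ε ^ 2 / 2)) := by
        rw [exp_le_exp]
        nlinarith [mul_le_mul_of_nonneg_left (exp_neg_le_one_sub_add_sq_div_two hε) hrate]

end Tails

end Moments

/-- for `Z₁,…,Z_N` (`N ≥ 2`) i.i.d. random variables with values in a compact
interval `[a,b]`, `a < b`, `Δ = Var(Z₁) > 0`, `Δ̂` the empirical variance, `ε > 0` and
`γ = (1+ε)^{1/2} − 1`, one has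
`P(Δ̂/Δ > 1 + ε) ≤ exp(−(N−1)Δγ²/(2(b−a)²))` and the same bound for
`P(Δ̂/Δ < 1 − ε)`. -/
theorem ratio_empirical_variance_bound {Ω : Type*} [MeasurableSpace Ω] (μ : Measure Ω)
    [IsProbabilityMeasure μ]
    (N : ℕ) (hN : 2 ≤ N) (a b : ℝ) (hab : a < b) (Z : Fin N → Ω → ℝ)
    (hmeas : ∀ n, Measurable (Z n))
    (hval : ∀ n ω, Z n ω ∈ Set.Icc a b)
    (hindep : iIndepFun Z μ)
    (hident : ∀ m n, IdentDistrib (Z m) (Z n) μ μ)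
    (Δ : ℝ) (hΔ : Δ = variance (Z ⟨0, by omega⟩) μ) (hΔpos : 0 < Δ)
    (Δhat : Ω → ℝ)
    (hΔhat : ∀ ω, Δhat ω =
      ((N : ℝ) - 1)⁻¹ * ∑ n, (Z n ω - (N : ℝ)⁻¹ * ∑ m, Z m ω) ^ 2)
    (ε γ : ℝ) (hε : 0 < ε) (hγ : γ = Real.sqrt (1 + ε) - 1) :
    μ {ω | 1 + ε < Δhat ω / Δ}
        ≤ ENNReal.ofReal (Real.exp (-(((N : ℝ) - 1) * Δ * γ ^ 2 / (2 * (b - a) ^ 2)))) ∧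
      μ {ω | Δhat ω / Δ < 1 - ε}
        ≤ ENNReal.ofReal (Real.exp (-(((N : ℝ) - 1) * Δ * γ ^ 2 / (2 * (b - a) ^ 2)))) := by
  obtain rfl : Δhat = fun ω => sampleVariance (Z · ω) := funext hΔhat
  set ρ := (b - a) ^ 2 / (2 * (N / 2 : ℕ)) with hρdef
  have hk : (0 : ℝ) < (N / 2 : ℕ) := Nat.cast_pos.2 (by omega)
  have hρ : 0 < ρ := div_pos (pow_pos (sub_pos.2 hab) 2) (by positivity)
  have hint := integrable_exp_mul_sampleVariance (μ := μ) hN hmeas hval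
  have hmgf := hΔ ▸ mgf_sampleVariance_le hN hmeas hindep hident hab hval ⟨0, by omega⟩
  have hbound {x : ℝ} (hx : γ ^ 2 ≤ x ^ 2) : exp (-(Δ / ρ * x ^ 2 / 2))
      ≤ exp (-(((N : ℝ) - 1) * Δ * γ ^ 2 / (2 * (b - a) ^ 2))) := by
    rw [exp_le_exp, neg_le_neg_iff]
    calc ((N : ℝ) - 1) * Δ * γ ^ 2 / (2 * (b - a) ^ 2)
        ≤ 2 * (N / 2 : ℕ) * Δ * x ^ 2 / (2 * (b - a) ^ 2) := by
          gcongr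
          exact Nat.cast_sub_one_le_two_mul_cast_div_two N
      _ = Δ / ρ * x ^ 2 / 2 := by rw [hρdef]; field_simp
  have hμ {s t : Set Ω} {B : ℝ} (hst : s ⊆ t) (ht : μ.real t ≤ B) : μ s ≤ ENNReal.ofReal B :=
    (measure_mono hst).trans (ofReal_measureReal (μ := μ) (s := t) ▸ ENNReal.ofReal_le_ofReal ht)
  constructor
  · refine hμ (fun ω hω => ?_) ((measureReal_ge_le_of_mgf_le hΔpos.le hρ hε.le hint hmgf).trans
      (hbound (by rw [hγ])))
    exact (lt_div_iff₀ hΔpos).1 hω |>.le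
  · refine hμ (fun ω hω => ?_) ((measureReal_le_le_of_mgf_le hΔpos.le hρ hε.le hint hmgf).trans
      (hbound (hγ ▸ sq_sqrt_one_add_sub_one_le_sq hε.le)))
    exact (div_lt_iff₀ hΔpos).1 hω |>.le
end

section
/- Let s ≥ 1, let f : [0,1]ˢ → ℝ be Lipschitz with constant L with respect to the Euclidean norm, and let k ≥ 2, N = kˢ. Let C₁,…,C_N be the N subcubes of edge length 1/k partitioning [0,1]ˢ, and let Î_Haber = (1/N)∑ₙ f(Xₙ) with Xₙ independent, Xₙ uniform on Cₙ. Then E[Î_Haber] = ∫_{[0,1]ˢ} f(x)dx and Var[Î_Haber] ≤ (L²s/12)·N^{−1−2/s}; in particular RMSE(Î_Haber) ≤ L·(s/12)^{1/2}·N^{−1/2−1/s}. -/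
open MeasureTheory ProbabilityTheory

noncomputable section

/-- The subcube of edge length `1/k` indexed by `m : Fin s → Fin k`,
namely `∏ᵢ [mᵢ/k, (mᵢ+1)/k]`. -/
def subCube {s : ℕ} (k : ℕ) (m : Fin s → Fin k) : Set (Fin s → ℝ) :=
  Set.Icc (fun i => (m i : ℝ) / k) (fun i => ((m i : ℝ) + 1) / k)

/-- Law of one independent uniform point in each of the `k^s` subcubes. -/
def haberMeasure (s k : ℕ) : Measure ((Fin s → Fin k) → (Fin s → ℝ)) :=
  Measure.pi fun m => unif (subCube k m)

/-- Haber's estimator of order one. -/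
def haberEst {s : ℕ} (k : ℕ) (f : (Fin s → ℝ) → ℝ) : ((Fin s → Fin k) → (Fin s → ℝ)) → ℝ :=
  fun ω => (∑ m : Fin s → Fin k, f (ω m)) / (k ^ s : ℕ)

/-!
The `k ^ s` subcubes tile `[0,1]ˢ` up to null sets, and the uniform law on a subcube has density
`N = k ^ s` there, so `N⁻¹ 𝔼 f(Xₙ) = ∫_{Cₙ} f` and the estimator is unbiased. The points are
independent, so `Var Î = N⁻² ∑ₙ Var f(Xₙ)`. Comparing with the value at the centre `cₙ` of `Cₙ`,
`Var f(Xₙ) ≤ 𝔼 (f(Xₙ) - f(cₙ))² ≤ L² 𝔼 ‖Xₙ - cₙ‖² = L² s / (12 k²)`, because each coordinate of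
`Xₙ` is uniform on an interval of length `1/k`, and `N⁻¹ k⁻² = N^(-1-2/s)`.
-/
open Set

section Uniform

variable {s : ℕ}

lemma continuousOn_of_abs_sub_le_mul_sqrt {S : Set (Fin s → ℝ)} {f : (Fin s → ℝ) → ℝ} {L : ℝ}
    (hf : ∀ x ∈ S, ∀ y ∈ S, |f x - f y| ≤ L * √(∑ i, (x i - y i) ^ 2)) :
    ContinuousOn f S := by
  intro x hx
  rw [ContinuousWithinAt, tendsto_iff_dist_tendsto_zero]
  have hbound : Filter.Tendsto (fun y => L * √(∑ i, (y i - x i) ^ 2)) (nhdsWithin x S)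
      (nhds 0) := by
    have hcont : Continuous fun y : Fin s → ℝ => L * √(∑ i, (y i - x i) ^ 2) := by fun_prop
    simpa using (hcont.tendsto x).mono_left nhdsWithin_le_nhds
  refine squeeze_zero' (Filter.Eventually.of_forall fun _ => dist_nonneg) ?_ hbound
  filter_upwards [self_mem_nhdsWithin] with y hy
  exact hf y hy x hx

instance (R : Set (Fin s → ℝ)) : IsZeroOrProbabilityMeasure (unif R) := by
  unfold unif; infer_instance

lemma integral_unif (R : Set (Fin s → ℝ)) (f : (Fin s → ℝ) → ℝ) :
    ∫ x, f x ∂unif R = (volume R).toReal⁻¹ * ∫ x in R, f x := by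
  rw [unif, ProbabilityTheory.cond, integral_smul_measure, ENNReal.toReal_inv, smul_eq_mul]

lemma ContinuousOn.memLp_unif {R : Set (Fin s → ℝ)} (hRc : IsCompact R) (hRm : MeasurableSet R)
    {f : (Fin s → ℝ) → ℝ} (hf : ContinuousOn f R) (p : ENNReal) :
    MemLp f p (unif R) := by
  obtain ⟨C, hC⟩ := hRc.exists_bound_of_continuousOn hf
  have hmeas : AEStronglyMeasurable f (unif R) :=
    (hf.aestronglyMeasurable hRm).smul_measure _
  exact (memLp_top_of_bound hmeas C (ae_cond_of_forall_mem hRm hC)).mono_exponent le_top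

lemma isProbabilityMeasure_unif_Icc {a b : Fin s → ℝ} (hab : ∀ i, a i < b i) :
    IsProbabilityMeasure (unif (Icc a b)) := by
  refine cond_isProbabilityMeasure_of_finite ?_ isCompact_Icc.measure_ne_top
  simp [Real.volume_Icc_pi, Finset.prod_ne_zero_iff, hab]

lemma isProbabilityMeasure_cond_Icc_s7 {α β : ℝ} (h : α < β) :
    IsProbabilityMeasure ((volume : Measure ℝ)[|Icc α β]) :=
  cond_isProbabilityMeasure_of_finite (by simp [h]) (by simp)

lemma unif_Icc_eq_pi {a b : Fin s → ℝ} (hab : ∀ i, a i < b i) :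
    unif (Icc a b) = Measure.pi fun i => (volume : Measure ℝ)[|Icc (a i) (b i)] := by
  have := fun i => isProbabilityMeasure_cond_Icc_s7 (hab i)
  refine (Measure.pi_eq fun t ht => ?_).symm
  rw [unif, cond_apply measurableSet_Icc, ← pi_univ_Icc,
    ← pi_inter_distrib, volume_pi_pi, volume_pi_pi, ENNReal.prod_inv_distrib,
    ← Finset.prod_mul_distrib]
  · exact Finset.prod_congr rfl fun i _ => (cond_apply measurableSet_Icc _ _).symm
  · exact fun i _ j _ _ => Or.inr (by simp)

lemma integral_cond_Icc_sq_sub_midpoint {α β : ℝ} (h : α < β) :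
    ∫ t, (t - (α + β) / 2) ^ 2 ∂(volume : Measure ℝ)[|Icc α β] = (β - α) ^ 2 / 12 := by
  have hint : ∫ t in Icc α β, (t - (α + β) / 2) ^ 2 = (β - α) ^ 3 / 12 := by
    rw [integral_Icc_eq_integral_Ioc, ← intervalIntegral.integral_of_le h.le,
      intervalIntegral.integral_comp_sub_right (fun x => x ^ 2), integral_pow]
    ring
  rw [ProbabilityTheory.cond, integral_smul_measure, hint, Real.volume_Icc, ENNReal.toReal_inv,
    ENNReal.toReal_ofReal (sub_pos.2 h).le, smul_eq_mul]
  field_simp [(sub_pos.2 h).ne']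

lemma integral_unif_Icc_sq_sub_midpoint {a b : Fin s → ℝ} (hab : ∀ i, a i < b i) (i : Fin s) :
    ∫ x, (x i - (a i + b i) / 2) ^ 2 ∂unif (Icc a b) = (b i - a i) ^ 2 / 12 := by
  have := fun i => isProbabilityMeasure_cond_Icc_s7 (hab i)
  rw [unif_Icc_eq_pi hab, integral_comp_eval (X := fun _ => ℝ) (i := i)
    (f := fun t => (t - (a i + b i) / 2) ^ 2) (by fun_prop),
    integral_cond_Icc_sq_sub_midpoint (hab i)]

lemma strataVar_Icc_le {a b : Fin s → ℝ} (hab : ∀ i, a i < b i) {f : (Fin s → ℝ) → ℝ} {L : ℝ}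
    (hf : ∀ x ∈ Icc a b, ∀ y ∈ Icc a b, |f x - f y| ≤ L * √(∑ i, (x i - y i) ^ 2)) :
    strataVar f (Icc a b) ≤ L ^ 2 / 12 * ∑ i, (b i - a i) ^ 2 := by
  have := isProbabilityMeasure_unif_Icc hab
  set c : Fin s → ℝ := fun i => (a i + b i) / 2
  have hc : c ∈ Icc a b :=
    ⟨fun i => by simp only [c]; linarith [hab i], fun i => by simp only [c]; linarith [hab i]⟩
  have hmeas : AEStronglyMeasurable f (unif (Icc a b)) :=
    ((continuousOn_of_abs_sub_le_mul_sqrt hf).memLp_unif isCompact_Icc measurableSet_Icc 1).1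
  have hsq : ∀ x ∈ Icc a b, (f x - f c) ^ 2 ≤ L ^ 2 * ∑ i, (x i - c i) ^ 2 := by
    intro x hx
    calc (f x - f c) ^ 2 = |f x - f c| ^ 2 := (sq_abs _).symm
      _ ≤ (L * √(∑ i, (x i - c i) ^ 2)) ^ 2 := pow_le_pow_left₀ (abs_nonneg _) (hf x hx c hc) 2
      _ = L ^ 2 * ∑ i, (x i - c i) ^ 2 := by
        rw [mul_pow, Real.sq_sqrt (Finset.sum_nonneg fun i _ => sq_nonneg _)]
  have hint : ∀ i, Integrable (fun x : Fin s → ℝ => (x i - c i) ^ 2) (unif (Icc a b)) := fun i =>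
    (memLp_one_iff_integrable.1 (ContinuousOn.memLp_unif isCompact_Icc measurableSet_Icc
      (by fun_prop) 1))
  calc strataVar f (Icc a b) = variance (fun x => f x - f c) (unif (Icc a b)) :=
        (variance_sub_const hmeas _).symm
    _ ≤ ∫ x, (f x - f c) ^ 2 ∂unif (Icc a b) :=
        variance_le_expectation_sq (hmeas.sub aestronglyMeasurable_const)
    _ ≤ ∫ x, L ^ 2 * ∑ i, (x i - c i) ^ 2 ∂unif (Icc a b) :=
        integral_mono_of_nonneg (Filter.Eventually.of_forall fun _ => sq_nonneg _)
          ((integrable_finsetSum _ fun i _ => hint i).const_mul _)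
          (ae_cond_of_forall_mem measurableSet_Icc hsq)
    _ = L ^ 2 / 12 * ∑ i, (b i - a i) ^ 2 := by
        rw [integral_const_mul, integral_finsetSum _ fun i _ => hint i, Finset.mul_sum,
          Finset.mul_sum]
        exact Finset.sum_congr rfl fun i _ => by
          rw [integral_unif_Icc_sq_sub_midpoint hab]; ring

end Uniform

lemma iUnion_Icc_div_natCast {k : ℕ} (hk : 0 < k) :
    ⋃ j : Fin k, Icc ((j : ℝ) / k) (((j : ℝ) + 1) / k) = Icc 0 1 := by
  have hk' : (0 : ℝ) < k := by exact_mod_cast hk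
  ext x
  simp only [mem_iUnion, mem_Icc]
  constructor
  · rintro ⟨j, hjx, hxj⟩
    have hj : (j : ℝ) + 1 ≤ k := by exact_mod_cast j.2
    exact ⟨le_trans (by positivity) hjx, hxj.trans ((div_le_one hk').2 hj)⟩
  · rintro ⟨hx0, hx1⟩
    refine ⟨⟨min ⌊x * k⌋₊ (k - 1), by omega⟩, ?_, ?_⟩
    · rw [div_le_iff₀ hk']
      exact le_trans (by exact_mod_cast min_le_left _ _) (Nat.floor_le (by positivity))
    · rw [le_div_iff₀ hk']
      show x * k ≤ ((min ⌊x * k⌋₊ (k - 1) : ℕ) : ℝ) + 1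
      rcases le_total ⌊x * k⌋₊ (k - 1) with h | h
      · rw [min_eq_left h]
        exact (Nat.lt_floor_add_one _).le
      · rw [min_eq_right h, Nat.cast_sub hk, Nat.cast_one, sub_add_cancel]
        nlinarith

section Cubes

variable {s k : ℕ}

lemma subCube_eq_pi (m : Fin s → Fin k) :
    subCube k m = univ.pi fun i => Icc ((m i : ℝ) / k) (((m i : ℝ) + 1) / k) :=
  (pi_univ_Icc _ _).symm

lemma subCube_lower_lt_upper (m : Fin s → Fin k) (i : Fin s) :
    (m i : ℝ) / k < ((m i : ℝ) + 1) / k :=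
  div_lt_div_of_pos_right (lt_add_one _) (by exact_mod_cast (m i).pos)

lemma iUnion_subCube (hk : 0 < k) : ⋃ m : Fin s → Fin k, subCube k m = unitCube s := by
  simp_rw [subCube_eq_pi]
  rw [iUnion_univ_pi fun (_ : Fin s) (j : Fin k) => Icc ((j : ℝ) / k) (((j : ℝ) + 1) / k),
    iUnion_Icc_div_natCast hk, pi_univ_Icc]
  rfl

lemma volume_subCube (m : Fin s → Fin k) : (volume (subCube k m)).toReal = ((k : ℝ) ^ s)⁻¹ := by
  rw [subCube, Real.volume_Icc_pi_toReal (fun i => (subCube_lower_lt_upper m i).le),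
    ← inv_pow]
  calc ∏ i, (((m i : ℝ) + 1) / k - (m i : ℝ) / k) = ∏ _i : Fin s, (k : ℝ)⁻¹ :=
        Finset.prod_congr rfl fun i _ => by ring
    _ = (k : ℝ)⁻¹ ^ s := by simp

lemma pairwise_aedisjoint_subCube :
    Pairwise fun m m' : Fin s → Fin k => AEDisjoint volume (subCube k m) (subCube k m') := by
  intro m m' hne
  obtain ⟨i, hi⟩ := Function.ne_iff.1 hne
  have hlt {j j' : Fin k} (h : j < j') : ((j : ℝ) + 1) / k ≤ (j' : ℝ) / k :=
    div_le_div_of_nonneg_right (by exact_mod_cast h) k.cast_nonneg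
  show volume (subCube k m ∩ subCube k m') = 0
  rw [subCube, subCube, Icc_inter_Icc, Real.volume_Icc_pi]
  refine Finset.prod_eq_zero (Finset.mem_univ i) (ENNReal.ofReal_eq_zero.2 (sub_nonpos.2 ?_))
  rcases lt_or_gt_of_ne hi with h | h
  · exact inf_le_left.trans ((hlt h).trans le_sup_right)
  · exact inf_le_right.trans ((hlt h).trans le_sup_left)

end Cubes

section Haber

variable {s k : ℕ}

instance (m : Fin s → Fin k) : IsProbabilityMeasure (unif (subCube k m)) :=
  isProbabilityMeasure_unif_Icc (subCube_lower_lt_upper m)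

instance : IsProbabilityMeasure (haberMeasure s k) := by
  unfold haberMeasure; infer_instance

lemma subCube_subset_unitCube (hk : 0 < k) (m : Fin s → Fin k) : subCube k m ⊆ unitCube s :=
  (subset_iUnion (subCube k) m).trans (iUnion_subCube hk).subset

lemma setIntegral_unitCube_eq_sum_subCube (hk : 0 < k) {f : (Fin s → ℝ) → ℝ}
    (hf : IntegrableOn f (unitCube s)) :
    ∫ x in unitCube s, f x = ∑ m : Fin s → Fin k, ∫ x in subCube k m, f x := by
  rw [← iUnion_subCube hk] at hf ⊢
  rw [integral_iUnion_ae (s := subCube k) (fun m => measurableSet_Icc.nullMeasurableSet)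
    pairwise_aedisjoint_subCube hf, tsum_fintype]

lemma memLp_unif_subCube (hk : 0 < k) {f : (Fin s → ℝ) → ℝ} (hf : ContinuousOn f (unitCube s))
    (p : ENNReal) (m : Fin s → Fin k) : MemLp f p (unif (subCube k m)) :=
  (hf.mono (subCube_subset_unitCube hk m)).memLp_unif isCompact_Icc measurableSet_Icc p

lemma integral_haberEst (hk : 0 < k) {f : (Fin s → ℝ) → ℝ} (hf : ContinuousOn f (unitCube s)) :
    ∫ ω, haberEst k f ω ∂haberMeasure s k = ∫ x in unitCube s, f x := by
  have hLp := memLp_unif_subCube hk hf 1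
  have hint (m : Fin s → Fin k) : Integrable (fun ω => f (ω m)) (haberMeasure s k) :=
    integrable_comp_eval (memLp_one_iff_integrable.1 (hLp m))
  calc ∫ ω, haberEst k f ω ∂haberMeasure s k
      = (∑ m, ∫ ω, f (ω m) ∂haberMeasure s k) / (k ^ s : ℕ) := by
        simp only [haberEst]
        rw [integral_div, integral_finsetSum _ fun m _ => hint m]
    _ = (∑ m, ∫ x, f x ∂unif (subCube k m)) / (k ^ s : ℕ) := by
        congr 1
        exact Finset.sum_congr rfl fun m _ => integral_comp_eval (hLp m).1
    _ = ∑ m : Fin s → Fin k, ∫ x in subCube k m, f x := by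
        simp_rw [integral_unif, volume_subCube, inv_inv, ← Finset.mul_sum]
        push_cast
        field_simp
    _ = ∫ x in unitCube s, f x :=
        (setIntegral_unitCube_eq_sum_subCube hk (hf.integrableOn_compact isCompact_Icc)).symm

lemma variance_haberEst (hk : 0 < k) {f : (Fin s → ℝ) → ℝ} (hf : ContinuousOn f (unitCube s)) :
    variance (haberEst k f) (haberMeasure s k)
      = (∑ m : Fin s → Fin k, strataVar f (subCube k m)) / ((k : ℝ) ^ s) ^ 2 := by
  have hEst : haberEst k f = ((k ^ s : ℕ) : ℝ)⁻¹ • ∑ m : Fin s → Fin k, fun ω => f (ω m) := by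
    ext ω
    simp [haberEst, div_eq_inv_mul]
  rw [hEst, variance_smul, haberMeasure, variance_sum_pi (memLp_unif_subCube hk hf 2)]
  push_cast
  simp only [strataVar]
  field_simp

lemma strataVar_subCube_le {f : (Fin s → ℝ) → ℝ} {L : ℝ} (hk : 0 < k)
    (hf : ∀ x ∈ unitCube s, ∀ y ∈ unitCube s, |f x - f y| ≤ L * √(∑ i, (x i - y i) ^ 2))
    (m : Fin s → Fin k) :
    strataVar f (subCube k m) ≤ L ^ 2 * s / 12 * ((k : ℝ) ^ 2)⁻¹ := by
  have hsub := subCube_subset_unitCube hk m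
  refine (strataVar_Icc_le (subCube_lower_lt_upper m) fun x hx y hy =>
    hf x (hsub hx) y (hsub hy)).trans_eq ?_
  rw [Finset.sum_congr rfl fun i _ =>
    show (((m i : ℝ) + 1) / k - (m i : ℝ) / k) ^ 2 = ((k : ℝ) ^ 2)⁻¹ by ring]
  simp only [Finset.sum_const, Finset.card_univ, Fintype.card_fin, nsmul_eq_mul]
  ring

lemma variance_haberEst_le {f : (Fin s → ℝ) → ℝ} {L : ℝ} (hk : 0 < k)
    (hf : ∀ x ∈ unitCube s, ∀ y ∈ unitCube s, |f x - f y| ≤ L * √(∑ i, (x i - y i) ^ 2)) :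
    variance (haberEst k f) (haberMeasure s k)
      ≤ L ^ 2 * s / 12 * (((k : ℝ) ^ s)⁻¹ * ((k : ℝ) ^ 2)⁻¹) := by
  rw [variance_haberEst hk (continuousOn_of_abs_sub_le_mul_sqrt hf)]
  calc (∑ m : Fin s → Fin k, strataVar f (subCube k m)) / ((k : ℝ) ^ s) ^ 2
      ≤ (∑ _m : Fin s → Fin k, L ^ 2 * s / 12 * ((k : ℝ) ^ 2)⁻¹) / ((k : ℝ) ^ s) ^ 2 := by
        gcongr with m
        exact strataVar_subCube_le hk hf m
    _ = L ^ 2 * s / 12 * (((k : ℝ) ^ s)⁻¹ * ((k : ℝ) ^ 2)⁻¹) := by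
        simp only [Finset.sum_const, Finset.card_univ, Fintype.card_pi, Fintype.card_fin,
          Finset.prod_const, nsmul_eq_mul, Nat.cast_pow]
        field_simp

end Haber

lemma pow_rpow_neg_one_sub_two_div {x : ℝ} (hx : 0 < x) {s : ℕ} (hs : s ≠ 0) :
    (x ^ s) ^ (-1 - 2 / s : ℝ) = (x ^ s)⁻¹ * (x ^ 2)⁻¹ := by
  rw [← Real.rpow_natCast x s, ← Real.rpow_mul hx.le, mul_sub, mul_div_cancel₀ _ (by positivity),
    Real.rpow_sub hx, mul_neg_one, Real.rpow_neg hx.le, Real.rpow_natCast, div_eq_mul_inv]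
  norm_cast

/-- for `f` Lipschitz with constant `L` w.r.t. the Euclidean norm and `N = kˢ`,
Haber's estimator of order one is unbiased for `∫_{[0,1]ˢ} f` and satisfies
`Var[Î_Haber] ≤ (L²s/12)·N^(−1−2/s)`, hence `RMSE(Î_Haber) ≤ L (s/12)^{1/2} N^(−1/2−1/s)`. -/
theorem haber_unbiased_and_var_le {s : ℕ} (hs : 1 ≤ s) (k : ℕ) (hk : 2 ≤ k)
    (L : ℝ) (f : (Fin s → ℝ) → ℝ)
    (hLip : ∀ x ∈ unitCube s, ∀ y ∈ unitCube s,
      |f x - f y| ≤ L * Real.sqrt (∑ i, (x i - y i) ^ 2)) :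
    (∫ ω, haberEst k f ω ∂(haberMeasure s k) = ∫ x in unitCube s, f x) ∧
      variance (haberEst k f) (haberMeasure s k)
        ≤ L ^ 2 * s / 12 * ((k : ℝ) ^ s) ^ (-(1 : ℝ) - 2 / s) ∧
      Real.sqrt (variance (haberEst k f) (haberMeasure s k))
        ≤ L * Real.sqrt (s / 12) * ((k : ℝ) ^ s) ^ (-(1 / 2 : ℝ) - 1 / s) := by
  have hk₀ : 0 < k := by omega
  have hkR : (0 : ℝ) < k := by exact_mod_cast hk₀
  have hcont : ContinuousOn f (unitCube s) := continuousOn_of_abs_sub_le_mul_sqrt hLip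
  have hL : 0 ≤ L := by
    have h := hLip 0 ⟨le_rfl, zero_le_one⟩ 1 ⟨zero_le_one, le_rfl⟩
    simp only [Pi.zero_apply, Pi.one_apply, zero_sub, neg_one_sq, Finset.sum_const,
      Finset.card_univ, Fintype.card_fin, nsmul_eq_mul, mul_one] at h
    exact nonneg_of_mul_nonneg_left ((abs_nonneg _).trans h) (by positivity)
  have hvar : variance (haberEst k f) (haberMeasure s k)
      ≤ L ^ 2 * s / 12 * ((k : ℝ) ^ s) ^ (-(1 : ℝ) - 2 / s) := by
    rw [pow_rpow_neg_one_sub_two_div hkR (by omega)]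
    exact variance_haberEst_le hk₀ hLip
  refine ⟨integral_haberEst hk₀ hcont, hvar, ?_⟩
  calc √(variance (haberEst k f) (haberMeasure s k))
      ≤ √((L * √(s / 12) * ((k : ℝ) ^ s) ^ (-(1 / 2 : ℝ) - 1 / s)) ^ 2) := by
        refine Real.sqrt_le_sqrt (hvar.trans_eq ?_)
        rw [mul_pow, mul_pow, Real.sq_sqrt (by positivity),
          ← Real.rpow_mul_natCast (by positivity)]
        ring_nf
    _ = L * √(s / 12) * ((k : ℝ) ^ s) ^ (-(1 / 2 : ℝ) - 1 / s) :=
        Real.sqrt_sq (by positivity)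
end
end

section
/- Let R ⊆ [0,1]ˢ be a rectangle with side lengths μ₁,…,μ_s, and let f : [0,1]ˢ → ℝ satisfy |f(x) − f(y)| ≤ (∑ᵢ βᵢ²(xᵢ − yᵢ)²)^{1/2} for all x, y ∈ R, where βᵢ > 0. Then, with X uniform on R, Var[f(X) | X ∈ R] ≤ (1/12)∑_{i=1}^s βᵢ²μᵢ². -/
open MeasureTheory ProbabilityTheory

noncomputable section

/-!
Let `c` be the centre of `R`. Since the variance is the least mean square deviation from a
constant, `Var f ≤ E (f X - f c)²`, and the hypothesis bounds this by `∑ᵢ βᵢ² E (Xᵢ - cᵢ)²`.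
Under the uniform law on `R` the coordinates are independent and uniform on the sides
`[aᵢ, bᵢ]`, so `E (Xᵢ - cᵢ)² = μᵢ² / 12`.
-/

open Set Filter

theorem ContinuousOn.of_abs_sub_le {α : Type*} [TopologicalSpace α] {f : α → ℝ} {s : Set α}
    (d : α → α → ℝ) (hd : ∀ x ∈ s, ContinuousWithinAt (d · x) s x) (hdx : ∀ x ∈ s, d x x = 0)
    (h : ∀ x ∈ s, ∀ y ∈ s, |f x - f y| ≤ d x y) : ContinuousOn f s := by
  intro x hx
  rw [ContinuousWithinAt, tendsto_iff_dist_tendsto_zero]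
  have hdx' := hd x hx
  rw [ContinuousWithinAt, hdx x hx] at hdx'
  exact squeeze_zero' (Eventually.of_forall fun _ => dist_nonneg)
    (eventually_nhdsWithin_of_forall fun y hy => h y hy x hx) hdx'

theorem ContinuousOn.integrable_cond {X E : Type*} [TopologicalSpace X] [T2Space X]
    [MeasurableSpace X] [OpensMeasurableSpace X] [NormedAddCommGroup E] {μ : Measure X}
    [IsFiniteMeasureOnCompacts μ] {K : Set X} {f : X → E} (hf : ContinuousOn f K)
    (hK : IsCompact K) : Integrable f μ[|K] := by
  by_cases h0 : μ K = 0
  · simp [cond_eq_zero_of_meas_eq_zero h0]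
  · exact (hf.integrableOn_compact hK).smul_measure (ENNReal.inv_ne_top.2 h0)

theorem ProbabilityTheory.variance_le_integral_of_sq_sub_le {Ω : Type*} [MeasurableSpace Ω]
    {μ : Measure Ω} [IsProbabilityMeasure μ] {X Y : Ω → ℝ} (hX : AEStronglyMeasurable X μ)
    (hY : Integrable Y μ) (c : ℝ) (hXY : ∀ᵐ ω ∂μ, (X ω - c) ^ 2 ≤ Y ω) :
    Var[X; μ] ≤ ∫ ω, Y ω ∂μ := by
  rw [← variance_sub_const hX c]
  exact (variance_le_expectation_sq (hX.sub aestronglyMeasurable_const)).trans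
    (integral_mono_of_nonneg (ae_of_all _ fun _ => sq_nonneg _) hY hXY)

theorem Real.volume_cond_Icc_pi {ι : Type*} [Fintype ι] (a b : ι → ℝ) :
    (volume : Measure (ι → ℝ))[|Icc a b] = Measure.pi fun i => volume[|Icc (a i) (b i)] := by
  refine (Measure.pi_eq fun t ht => ?_).symm
  rw [cond_apply measurableSet_Icc, Real.volume_Icc_pi, ← pi_univ_Icc, ← pi_inter_distrib,
    volume_pi_pi, ENNReal.prod_inv_distrib (fun _ _ _ _ _ => Or.inr ENNReal.ofReal_ne_top),
    ← Finset.prod_mul_distrib]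
  refine Finset.prod_congr rfl fun i _ => ?_
  rw [cond_apply measurableSet_Icc, Real.volume_Icc]

theorem integral_cond_Icc_sq_sub_midpoint_s13 {p q : ℝ} (hpq : p ≤ q) :
    ∫ u, (u - (p + q) / 2) ^ 2 ∂volume[|Icc p q] = (q - p) ^ 2 / 12 := by
  have hmid : ∫ u in Icc p q, (u - (p + q) / 2) ^ 2 = (q - p) ^ 3 / 12 := by
    rw [integral_Icc_eq_integral_Ioc, ← intervalIntegral.integral_of_le hpq,
      intervalIntegral.integral_comp_sub_right (fun u => u ^ 2), integral_pow]
    ring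
  rw [ProbabilityTheory.cond, integral_smul_measure, hmid, Real.volume_Icc,
    ENNReal.toReal_inv, ENNReal.toReal_ofReal (sub_nonneg.2 hpq), smul_eq_mul]
  rcases eq_or_ne (q - p) 0 with h | h
  · simp [h]
  · field_simp

theorem integral_cond_Icc_pi_sq_sub_midpoint {ι : Type*} [Fintype ι] {a b : ι → ℝ}
    (hab : ∀ i, a i < b i) (i : ι) :
    ∫ x, (x i - (a i + b i) / 2) ^ 2 ∂(volume : Measure (ι → ℝ))[|Icc a b]
      = (b i - a i) ^ 2 / 12 := by
  have : ∀ j, IsProbabilityMeasure (volume[|Icc (a j) (b j)]) := fun j =>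
    cond_isProbabilityMeasure_of_finite (by simp [hab j]) (by simp)
  rw [Real.volume_cond_Icc_pi]
  exact (integral_comp_eval (X := fun _ => ℝ) (i := i)
    (f := fun u => (u - (a i + b i) / 2) ^ 2) (by fun_prop)).trans
    (integral_cond_Icc_sq_sub_midpoint_s13 (hab i).le)

theorem strata_variance_upper_bound_general {s : ℕ} (a b : Fin s → ℝ) (hab : a ≤ b)
    (β : Fin s → ℝ)
    (f : (Fin s → ℝ) → ℝ)
    (hup : ∀ x ∈ Set.Icc a b, ∀ y ∈ Set.Icc a b,
      |f x - f y| ≤ Real.sqrt (∑ i, β i ^ 2 * (x i - y i) ^ 2)) :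
    strataVar f (Set.Icc a b) ≤ (1 / 12) * ∑ i, β i ^ 2 * (b i - a i) ^ 2 := by
  by_cases hdeg : ∀ i, a i < b i
  swap
  -- A flat rectangle has volume zero, so the uniform law on it is the zero measure.
  · obtain ⟨i, hi⟩ := not_forall.1 hdeg
    have hvol : volume (Icc a b) = 0 := by
      rw [Real.volume_Icc_pi]
      exact Finset.prod_eq_zero (Finset.mem_univ i) (by simpa using hi)
    simp only [strataVar, unif, cond_eq_zero_of_meas_eq_zero hvol, variance_zero_measure]
    positivity
  set ν := (volume : Measure (Fin s → ℝ))[|Icc a b]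
  have : IsProbabilityMeasure ν := cond_isProbabilityMeasure_of_finite
    (by simp [Real.volume_Icc_pi, Finset.prod_eq_zero_iff, hdeg]) isCompact_Icc.measure_lt_top.ne
  set c : Fin s → ℝ := fun i => (a i + b i) / 2
  have hc : c ∈ Icc a b := by
    constructor <;> intro i <;> simp only [c] <;> linarith [hab i]
  have hf : ContinuousOn f (Icc a b) := .of_abs_sub_le _
    (fun x _ => ((continuous_finsetSum _ fun i _ => by fun_prop).sqrt).continuousWithinAt)
    (fun x _ => by simp) hup
  have hint (i : Fin s) : Integrable (fun x => β i ^ 2 * (x i - c i) ^ 2) ν :=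
    (Continuous.continuousOn (by fun_prop)).integrable_cond isCompact_Icc
  calc strataVar f (Icc a b) ≤ ∫ x, ∑ i, β i ^ 2 * (x i - c i) ^ 2 ∂ν := by
        refine variance_le_integral_of_sq_sub_le (μ := ν)
          (hf.integrable_cond isCompact_Icc).aestronglyMeasurable
          (integrable_finsetSum _ fun i _ => hint i) (f c) ?_
        filter_upwards [ae_cond_mem measurableSet_Icc] with x hx
        rw [← sq_abs]
        exact (Real.le_sqrt (abs_nonneg _) (by positivity)).1 (hup x hx c hc)
    _ = ∑ i, β i ^ 2 * ((b i - a i) ^ 2 / 12) := by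
        simp only [integral_finsetSum _ fun i _ => hint i, integral_const_mul, ν, c,
          integral_cond_Icc_pi_sq_sub_midpoint hdeg]
    _ = (1 / 12) * ∑ i, β i ^ 2 * (b i - a i) ^ 2 := by
        rw [Finset.mul_sum]; exact Finset.sum_congr rfl fun i _ => by ring

/-- if `|f(x) − f(y)| ≤ (∑ᵢ βᵢ²(xᵢ − yᵢ)²)^{1/2}` for all `x, y` in the
rectangle `R = [a,b] ⊆ [0,1]^s` with side lengths `μᵢ = bᵢ − aᵢ`, then
`Var[f(X) | X ∈ R] ≤ (1/12)∑ᵢ βᵢ²μᵢ²`. -/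
theorem strata_variance_upper_bound {s : ℕ} (a b : Fin s → ℝ) (hab : a ≤ b)
    (hsub : Set.Icc a b ⊆ unitCube s)
    (β : Fin s → ℝ) (hβ : ∀ i, 0 < β i)
    (f : (Fin s → ℝ) → ℝ)
    (hup : ∀ x ∈ Set.Icc a b, ∀ y ∈ Set.Icc a b,
      |f x - f y| ≤ Real.sqrt (∑ i, β i ^ 2 * (x i - y i) ^ 2)) :
    strataVar f (Set.Icc a b) ≤ (1 / 12) * ∑ i, β i ^ 2 * (b i - a i) ^ 2 :=
  strata_variance_upper_bound_general a b hab β f hup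
end
end
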